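/- The set of extreme points of the 24-cell 𝒞 = convexHull ℝ V is exactly V; in particular 𝒞 has exactly 24 vertices. -/

import Mathlib

open scoped RealInnerProductSpace

/-- The `i`-th standard basis vector of `EuclideanSpace ℝ (Fin 4)`. -/
noncomputable def stdV (i : Fin 4) : EuclideanSpace ℝ (Fin 4) :=
  EuclideanSpace.single i (1 : ℝ)

/-- The 24 vertices of the 24-cell: all permutations of the coordinates of `(±1, ±1, 0, 0)`. -/
def cellV : Set (EuclideanSpace ℝ (Fin 4)) :=
  {x | ∃ i j : Fin 4, i ≠ j ∧ ∃ ε δ : ℝ, (ε = 1 ∨ ε = -1) ∧ (δ = 1 ∨ δ = -1) ∧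
    x = ε • stdV i + δ • stdV j}

/-! Every vertex has norm `√2`, and in a strictly convex space a point of the sphere of radius `r`
is extreme in the closed ball of radius `r`, hence in every subset of that ball containing it.
For the count, the vertices are exactly the vectors with entries in `{-1, 0, 1}` and exactly two
nonzero entries, and there are `6 · 4 = 24` such sign patterns. -/

open Finset Metric

theorem extremePoints_convexHull_eq_of_subset_sphere {E : Type*} [NormedAddCommGroup E]
    [NormedSpace ℝ E] [StrictConvexSpace ℝ E] [Nontrivial E] {s : Set E} {c : E} {r : ℝ}
    (hs : s ⊆ sphere c r) : (convexHull ℝ s).extremePoints ℝ = s := by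
  refine extremePoints_convexHull_subset.antisymm fun v hv => ?_
  have hball : convexHull ℝ s ⊆ closedBall c r :=
    convexHull_min (hs.trans sphere_subset_closedBall) (convex_closedBall c r)
  refine inter_extremePoints_subset_extremePoints_of_subset hball ⟨subset_convexHull ℝ s hv, ?_⟩
  rw [StrictConvexSpace.extremePoints_closedBall_eq_sphere]
  exact hs hv

namespace SignType

lemma sign_cast {α : Type*} [Ring α] [LinearOrder α] [IsStrictOrderedRing α] (s : SignType) :
    SignType.sign (s : α) = s := by
  cases s <;> simp

lemma cast_eq_one_or_neg_one {α : Type*} [Zero α] [One α] [Neg α] {s : SignType} (hs : s ≠ 0) :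
    (s : α) = 1 ∨ (s : α) = -1 := by
  cases s <;> simp_all

end SignType

section SignVector

variable {ι : Type*}

noncomputable def signVec (f : ι → SignType) : EuclideanSpace ℝ ι :=
  WithLp.toLp 2 fun k => (f k : ℝ)

@[simp]
lemma signVec_apply (f : ι → SignType) (k : ι) : signVec f k = f k := rfl

lemma signVec_injective : Function.Injective (signVec (ι := ι)) :=
  Function.LeftInverse.injective (g := fun x k => SignType.sign (x k)) fun f => by
    ext k; simp [SignType.sign_cast]

lemma norm_sq_signVec [Fintype ι] (f : ι → SignType) :
    ‖signVec f‖ ^ 2 = #{k | f k ≠ 0} := by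
  rw [EuclideanSpace.real_norm_sq_eq, card_filter, Nat.cast_sum]
  refine sum_congr rfl fun k _ => ?_
  rw [signVec_apply]
  cases f k <;> simp

end SignVector

def cellSignPatterns : Finset (Fin 4 → SignType) := {f | #{k | f k ≠ 0} = 2}

lemma card_cellSignPatterns : #cellSignPatterns = 24 := by decide

lemma smul_stdV_add_smul_stdV_apply {i j : Fin 4} (hij : i ≠ j) (ε δ : ℝ) (k : Fin 4) :
    (ε • stdV i + δ • stdV j) k = if k = i then ε else if k = j then δ else 0 := by
  simp only [stdV, PiLp.add_apply, PiLp.smul_apply, PiLp.single_apply, smul_eq_mul]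
  split_ifs <;> simp_all

lemma cellV_eq_image : cellV = signVec '' cellSignPatterns := by
  ext x
  constructor
  · rintro ⟨i, j, hij, ε, δ, hε, hδ, rfl⟩
    refine ⟨fun k => SignType.sign ((ε • stdV i + δ • stdV j) k), ?_, ?_⟩
    · rw [mem_coe, cellSignPatterns, mem_filter, card_eq_two]
      refine ⟨mem_univ _, i, j, hij, ?_⟩
      ext k
      simp only [mem_filter, mem_univ, true_and, mem_insert, mem_singleton, ne_eq,
        sign_eq_zero_iff, smul_stdV_add_smul_stdV_apply hij]
      rcases hε with rfl | rfl <;> rcases hδ with rfl | rfl <;> split_ifs <;> simp_all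
    · ext k
      rw [signVec_apply, smul_stdV_add_smul_stdV_apply hij]
      rcases hε with rfl | rfl <;> rcases hδ with rfl | rfl <;> split_ifs <;> simp
  · rintro ⟨f, hf, rfl⟩
    obtain ⟨i, j, hij, hsupp⟩ := card_eq_two.1 (mem_filter.1 hf).2
    have hnz : ∀ k, f k ≠ 0 ↔ k = i ∨ k = j := by simpa using Finset.ext_iff.1 hsupp
    refine ⟨i, j, hij, f i, f j, SignType.cast_eq_one_or_neg_one ((hnz i).2 (.inl rfl)),
      SignType.cast_eq_one_or_neg_one ((hnz j).2 (.inr rfl)), ?_⟩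
    ext k
    rw [smul_stdV_add_smul_stdV_apply hij, signVec_apply]
    split_ifs with hi hj
    · rw [hi]
    · rw [hj]
    · rw [not_not.1 (mt (hnz k).1 (not_or.2 ⟨hi, hj⟩)), SignType.coe_zero]

lemma cellV_subset_sphere : cellV ⊆ sphere 0 (√2) := by
  rw [cellV_eq_image]
  rintro _ ⟨f, hf, rfl⟩
  rw [mem_sphere_zero_iff_norm, ← Real.sqrt_sq (norm_nonneg _), norm_sq_signVec,
    (mem_filter.1 hf).2]
  norm_num

theorem cell24_extremePoints :
    (convexHull ℝ cellV).extremePoints ℝ = cellV ∧ cellV.ncard = 24 := by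
  refine ⟨extremePoints_convexHull_eq_of_subset_sphere cellV_subset_sphere, ?_⟩
  rw [cellV_eq_image, Set.ncard_image_of_injective _ signVec_injective, Set.ncard_coe_finset,
    card_cellSignPatterns]
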